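/- arXiv:0905.3380 — 4 statements merged into one kernel-verified Lean document; each statement's English description precedes it below -/
import Mathlib

section
/- Let F be a set of blue points, let 1 ≤ k ≤ |F|, and suppose that the weight of F_k is δ at time t and δ−1 at time t+1. Then the transposition τ_{t+1} swaps some point f of F with a point x not in F, and moreover: either (i) τ_{t+1} moves f to the right and x is red, in which case τ_{t+1} is balanced and in π^t there are exactly k−1 points of F strictly to the left of the transposed pair; or (ii) τ_{t+1} moves f to the left and x is a blue point not in F. -/
open Finset

/-- An allowable sequence on `n` points (the points are the elements of `Fin n`).
`pos t x` is the position (from left to right, `0`-based) of point `x`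
in the linear ordering `π^t`. -/
structure AllowableSeq (n : ℕ) where
  pos : ℤ → Equiv.Perm (Fin n)
  adj : ∀ t : ℤ, ∃ p q : Fin n,
    ((pos t q : ℕ) = (pos t p : ℕ) + 1) ∧
    pos (t + 1) = (Equiv.swap p q).trans (pos t)
  rev : ∀ t : ℤ, pos (t + (n.choose 2 : ℤ)) = (pos t).trans Fin.revPerm

namespace AllowableSeq

variable {n : ℕ}

/-- The weight of a point: `+1` for blue, `-1` for red. -/
def wt (blue : Fin n → Bool) (x : Fin n) : ℤ := if blue x then 1 else -1

/-- The transposition `τ_{t+1}` (leading from `π^t` to `π^{t+1}`) swaps the points `p` and `q`. -/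
def SwapsAt (A : AllowableSeq n) (t : ℤ) (p q : Fin n) : Prop :=
  p ≠ q ∧ A.pos (t + 1) = (Equiv.swap p q).trans (A.pos t)

/-- `τ_{t+1}` is a balanced transposition swapping `p` and `q`: one of them is blue and the
other red, and the total weight of the points strictly to the left of the adjacent
pair in `π^t` equals `δ`. -/
def BalancedSwap (A : AllowableSeq n) (blue : Fin n → Bool) (δ : ℤ) (t : ℤ)
    (p q : Fin n) : Prop :=
  A.SwapsAt t p q ∧ (blue p ↔ ¬ blue q) ∧
  (∑ x : Fin n, if (A.pos t x : ℕ) < min (A.pos t p : ℕ) (A.pos t q : ℕ)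
      then wt blue x else 0) = δ

/-- The set of unordered pairs of points swapped by some balanced transposition of the
allowable sequence; its cardinality is the number of distinct balanced transpositions. -/
def balancedPairs (A : AllowableSeq n) (blue : Fin n → Bool) (δ : ℤ) : Set (Sym2 (Fin n)) :=
  { s | ∃ p q t, s = s(p, q) ∧ A.BalancedSwap blue δ t p q }

/-- A curve: a map `ℤ → Fin n` that is periodic with period `2 * C(n,2)`. -/
def IsCurve (A : AllowableSeq n) (γ : ℤ → Fin n) : Prop :=
  ∀ t : ℤ, γ (t + 2 * (n.choose 2 : ℤ)) = γ t

/-- The weight of a curve `γ` at time `t`: the sum of the weights of the points lying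
strictly to the left of `γ t` in `π^t`. -/
def cweight (A : AllowableSeq n) (blue : Fin n → Bool) (γ : ℤ → Fin n) (t : ℤ) : ℤ :=
  ∑ x : Fin n, if A.pos t x < A.pos t (γ t) then wt blue x else 0

/-- `γ` is the curve `Q_k` (with `k` 1-based): at every time `t`, `γ t` is the `k`-th point
of `Q` from left to right in `π^t`, i.e. `γ t ∈ Q` and exactly `k - 1` points of `Q` lie
strictly to the left of `γ t`. -/
def IsKth (A : AllowableSeq n) (Q : Finset (Fin n)) (k : ℕ) (γ : ℤ → Fin n) : Prop :=
  ∀ t : ℤ, γ t ∈ Q ∧ (Q.filter (fun x => A.pos t x < A.pos t (γ t))).card = k - 1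

/-- The mirror curve `γ̄` of `γ`, defined by `γ̄ (t + C(n,2)) = γ t`. -/
def mirror (γ : ℤ → Fin n) : ℤ → Fin n := fun t => γ (t - (n.choose 2 : ℤ))

/-- A border: a curve that is either blue and `≥δ` or red and `≤δ`, such that
(I) consecutive values are equal or have no point of the same colour between them, and
(II) it lies strictly to the left of its mirror curve. -/
def IsBorder (A : AllowableSeq n) (blue : Fin n → Bool) (δ : ℤ) (γ : ℤ → Fin n) : Prop :=
  A.IsCurve γ ∧
  (∀ t : ℤ, A.pos t (γ t) < A.pos t (mirror γ t)) ∧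
  (((∀ t : ℤ, blue (γ t) = true) ∧ (∀ t : ℤ, δ ≤ A.cweight blue γ t) ∧
      ∀ t : ℤ, γ (t + 1) = γ t ∨ ∀ x : Fin n, blue x = true →
        ¬ (min (A.pos (t+1) (γ t)) (A.pos (t+1) (γ (t+1))) < A.pos (t+1) x ∧
           A.pos (t+1) x < max (A.pos (t+1) (γ t)) (A.pos (t+1) (γ (t+1)))))
   ∨ ((∀ t : ℤ, blue (γ t) = false) ∧ (∀ t : ℤ, A.cweight blue γ t ≤ δ) ∧
      ∀ t : ℤ, γ (t + 1) = γ t ∨ ∀ x : Fin n, blue x = false →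
        ¬ (min (A.pos (t+1) (γ t)) (A.pos (t+1) (γ (t+1))) < A.pos (t+1) x ∧
           A.pos (t+1) x < max (A.pos (t+1) (γ t)) (A.pos (t+1) (γ (t+1))))))

/-- `Γ` is `⪯`-maximal among all borders: it is a border and no border lies strictly
to its right. -/
def IsMaxBorder (A : AllowableSeq n) (blue : Fin n → Bool) (δ : ℤ) (Γ : ℤ → Fin n) : Prop :=
  A.IsBorder blue δ Γ ∧
  ∀ γ : ℤ → Fin n, A.IsBorder blue δ γ → ¬ (∀ t : ℤ, A.pos t (Γ t) < A.pos t (γ t))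

/-- The curve `α` has the weight change `a ⇝ b` between the curves `lo` and `hi`:
at some time `t` its weight changes from `a` to `b`, the change occurring to the right
of `lo` and to the left of `hi`. -/
def HasChangeBetween (A : AllowableSeq n) (blue : Fin n → Bool) (a b : ℤ)
    (α lo hi : ℤ → Fin n) : Prop :=
  ∃ t : ℤ, A.cweight blue α t = a ∧ A.cweight blue α (t+1) = b ∧
    A.pos t (lo t) ≤ A.pos t (α t) ∧ A.pos (t+1) (lo (t+1)) < A.pos (t+1) (α (t+1)) ∧
    A.pos t (α t) ≤ A.pos t (hi t) ∧ A.pos (t+1) (α (t+1)) < A.pos (t+1) (hi (t+1))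

/-- The number of blue points strictly to the left of the adjacent pair `p, q` in `π^t`. -/
def blueLeftPair (A : AllowableSeq n) (blue : Fin n → Bool) (t : ℤ) (p q : Fin n) : ℕ :=
  (Finset.univ.filter (fun y => blue y = true ∧
    (A.pos t y : ℕ) < min (A.pos t p : ℕ) (A.pos t q : ℕ))).card

end AllowableSeq


/-!
Let `τ_{t+1}` swap the adjacent points `p` (left) and `q` (right), and let `S` be the set of
points to the left of the pair in `π^t`. The only points whose left sets change are `p`,
whose left set grows from `S` to `S ∪ {q}`, and `q`, whose left set shrinks from `S ∪ {p}`
to `S`. Since the `k`-th point of `F` is determined by how many points of `F` lie to its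
left, following `F_k` through the five possible configurations shows that its weight can
only drop by one if `F_k = p` moves right past a red point outside `F` (then its weight
`δ` is the weight of `S`, so the swap is balanced), or `F_k = q` moves left past a blue
point outside `F`.
-/

open AllowableSeq

namespace AllowableSeq

variable {n : ℕ} {blue : Fin n → Bool} {x : Fin n}

theorem wt_eq_one_iff : wt blue x = 1 ↔ blue x = true := by
  cases h : blue x <;> simp [wt, h]

theorem wt_eq_neg_one_iff : wt blue x = -1 ↔ blue x = false := by
  cases h : blue x <;> simp [wt, h]

end AllowableSeq

section LeftOf

variable {n : ℕ}

def leftOf (P : Equiv.Perm (Fin n)) (z : Fin n) : Finset (Fin n) :=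
  {x | P x < P z}

variable {P : Equiv.Perm (Fin n)} {p q x y z : Fin n}

@[simp]
theorem mem_leftOf : x ∈ leftOf P z ↔ P x < P z := by
  simp [leftOf]

theorem leftOf_subset_leftOf (h : P x < P y) : leftOf P x ⊆ leftOf P y :=
  fun _ hz => mem_leftOf.2 ((mem_leftOf.1 hz).trans h)

theorem val_apply_ne_of_ne (h : x ≠ y) : (P x : ℕ) ≠ P y :=
  fun e => h (P.injective (Fin.ext e))

theorem card_inter_leftOf_lt {F : Finset (Fin n)} (hx : x ∈ F) (h : P x < P y) :
    #(F ∩ leftOf P x) < #(F ∩ leftOf P y) := by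
  refine card_lt_card ((ssubset_iff_of_subset
    (inter_subset_inter_left (leftOf_subset_leftOf h))).2 ⟨x, ?_, ?_⟩)
  · exact mem_inter.2 ⟨hx, mem_leftOf.2 h⟩
  · simp

theorem eq_of_card_inter_leftOf_eq {F : Finset (Fin n)} (hx : x ∈ F) (hy : y ∈ F)
    (h : #(F ∩ leftOf P x) = #(F ∩ leftOf P y)) : x = y := by
  by_contra hne
  rcases (P.injective.ne hne).lt_or_gt with hlt | hlt
  · exact (card_inter_leftOf_lt hx hlt).ne h
  · exact (card_inter_leftOf_lt hy hlt).ne' h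

section Adjacent

variable (hpq : (P q : ℕ) = P p + 1)
include hpq

theorem ne_of_adjacent : p ≠ q := by
  rintro rfl
  omega

theorem leftOf_right_eq_insert : leftOf P q = insert p (leftOf P p) := by
  ext x
  simp only [mem_insert, mem_leftOf, Fin.lt_def]
  rcases eq_or_ne x p with rfl | hxp
  · simp [hpq]
  · have := val_apply_ne_of_ne (P := P) hxp
    simp only [hxp, false_or]
    omega

theorem filter_lt_min_eq_inter_leftOf (s : Finset (Fin n)) :
    s.filter (fun x => (P x : ℕ) < min (P p : ℕ) (P q : ℕ)) = s ∩ leftOf P p := by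
  rw [← filter_mem_eq_inter]
  refine filter_congr fun x _ => ?_
  rw [mem_leftOf, Fin.lt_def, min_eq_left (by omega)]

theorem leftOf_swap_of_ne (hzp : z ≠ p) (hzq : z ≠ q) :
    leftOf ((Equiv.swap p q).trans P) z = leftOf P z := by
  ext x
  have hp := val_apply_ne_of_ne (P := P) hzp
  have hq := val_apply_ne_of_ne (P := P) hzq
  simp only [mem_leftOf, Equiv.trans_apply, Equiv.swap_apply_of_ne_of_ne hzp hzq,
    Fin.lt_def]
  rcases eq_or_ne x p with rfl | hxp
  · rw [Equiv.swap_apply_left]; omega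
  rcases eq_or_ne x q with rfl | hxq
  · rw [Equiv.swap_apply_right]; omega
  rw [Equiv.swap_apply_of_ne_of_ne hxp hxq]

theorem leftOf_swap_left :
    leftOf ((Equiv.swap p q).trans P) p = insert q (leftOf P p) := by
  ext x
  simp only [mem_insert, mem_leftOf, Equiv.trans_apply, Equiv.swap_apply_left,
    Fin.lt_def]
  rcases eq_or_ne x p with rfl | hxp
  · simp [Equiv.swap_apply_left, ne_of_adjacent hpq]
  rcases eq_or_ne x q with rfl | hxq
  · simp [Equiv.swap_apply_right, hpq]
  have := val_apply_ne_of_ne (P := P) hxp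
  simp only [Equiv.swap_apply_of_ne_of_ne hxp hxq, hxq, false_or]
  omega

theorem leftOf_swap_right :
    leftOf ((Equiv.swap p q).trans P) q = leftOf P p := by
  ext x
  simp only [mem_leftOf, Equiv.trans_apply, Equiv.swap_apply_right, Fin.lt_def]
  rcases eq_or_ne x p with rfl | hxp
  · simp [Equiv.swap_apply_left, hpq]
  rcases eq_or_ne x q with rfl | hxq
  · simp [Equiv.swap_apply_right, hpq]
  rw [Equiv.swap_apply_of_ne_of_ne hxp hxq]

theorem kth_swap_cases {F : Finset (Fin n)} {z z' : Fin n} (hz : z ∈ F) (hz' : z' ∈ F)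
    (hcard : #(F ∩ leftOf ((Equiv.swap p q).trans P) z') = #(F ∩ leftOf P z)) :
    (z ≠ p ∧ z ≠ q ∧ z' = z) ∨ (z = p ∧ q ∈ F ∧ z' = q) ∨ (z = p ∧ q ∉ F ∧ z' = p) ∨
      (z = q ∧ p ∈ F ∧ z' = p) ∨ (z = q ∧ p ∉ F ∧ z' = q) := by
  have hp : p ∉ leftOf P p := by simp
  have hq : q ∉ leftOf P p := by simp [Fin.lt_def, hpq]
  set P' := (Equiv.swap p q).trans P
  rcases eq_or_ne z p with rfl | hzp
  · by_cases hqF : q ∈ F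
    · refine Or.inr (Or.inl ⟨rfl, hqF, eq_of_card_inter_leftOf_eq (P := P') hz' hqF ?_⟩)
      rw [hcard, leftOf_swap_right hpq]
    · refine Or.inr (Or.inr (Or.inl
        ⟨rfl, hqF, eq_of_card_inter_leftOf_eq (P := P') hz' hz ?_⟩))
      rw [hcard, leftOf_swap_left hpq, inter_insert_of_notMem hqF]
  rcases eq_or_ne z q with rfl | hzq
  · by_cases hpF : p ∈ F
    · refine Or.inr (Or.inr (Or.inr (Or.inl
        ⟨rfl, hpF, eq_of_card_inter_leftOf_eq (P := P') hz' hpF ?_⟩)))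
      rw [hcard, leftOf_swap_left hpq, leftOf_right_eq_insert hpq, inter_insert_of_mem hz,
        inter_insert_of_mem hpF, card_insert_of_notMem (fun h => hq (mem_inter.1 h).2),
        card_insert_of_notMem (fun h => hp (mem_inter.1 h).2)]
    · refine Or.inr (Or.inr (Or.inr (Or.inr
        ⟨rfl, hpF, eq_of_card_inter_leftOf_eq (P := P') hz' hz ?_⟩)))
      rw [hcard, leftOf_swap_right hpq, leftOf_right_eq_insert hpq, inter_insert_of_notMem hpF]
  · refine Or.inl ⟨hzp, hzq, eq_of_card_inter_leftOf_eq (P := P') hz' hz ?_⟩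
    rw [hcard, leftOf_swap_of_ne hpq hzp hzq]

theorem kth_weight_drop_cases {blue : Fin n → Bool} {F : Finset (Fin n)}
    (hF : ∀ x ∈ F, blue x = true) {z z' : Fin n} (hz : z ∈ F) (hz' : z' ∈ F)
    (hcard : #(F ∩ leftOf ((Equiv.swap p q).trans P) z') = #(F ∩ leftOf P z))
    (hw : ∑ x ∈ leftOf ((Equiv.swap p q).trans P) z', wt blue x =
      ∑ x ∈ leftOf P z, wt blue x - 1) :
    (z = p ∧ q ∉ F ∧ blue q = false) ∨ (z = q ∧ p ∉ F ∧ blue p = true) := by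
  have hp : p ∉ leftOf P p := by simp
  have hq : q ∉ leftOf P p := by simp [Fin.lt_def, hpq]
  rcases kth_swap_cases hpq hz hz' hcard with
    ⟨hzp, hzq, rfl⟩ | ⟨rfl, hqF, rfl⟩ | ⟨rfl, hqF, rfl⟩ | ⟨rfl, hpF, rfl⟩ | ⟨rfl, hpF, rfl⟩
  · rw [leftOf_swap_of_ne hpq hzp hzq] at hw
    omega
  · rw [leftOf_swap_right hpq] at hw
    omega
  · rw [leftOf_swap_left hpq, sum_insert hq] at hw
    exact Or.inl ⟨rfl, hqF, wt_eq_neg_one_iff.1 (by omega)⟩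
  · rw [leftOf_swap_left hpq, leftOf_right_eq_insert hpq, sum_insert hq, sum_insert hp,
      wt_eq_one_iff.2 (hF _ hz), wt_eq_one_iff.2 (hF _ hpF)] at hw
    omega
  · rw [leftOf_swap_right hpq, leftOf_right_eq_insert hpq, sum_insert hp] at hw
    exact Or.inr ⟨rfl, hpF, wt_eq_one_iff.1 (by omega)⟩

end Adjacent

end LeftOf

namespace AllowableSeq

variable {n : ℕ}

theorem cweight_eq_sum_leftOf (A : AllowableSeq n) (blue : Fin n → Bool) (γ : ℤ → Fin n)
    (t : ℤ) : A.cweight blue γ t = ∑ x ∈ leftOf (A.pos t) (γ t), wt blue x := by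
  rw [cweight, leftOf, sum_filter]

theorem IsKth.card_inter_leftOf {A : AllowableSeq n} {Q : Finset (Fin n)} {k : ℕ}
    {γ : ℤ → Fin n} (hγ : A.IsKth Q k γ) (t : ℤ) : #(Q ∩ leftOf (A.pos t) (γ t)) = k - 1 := by
  rw [← (hγ t).2, ← filter_mem_eq_inter]
  simp

end AllowableSeq

theorem down_change_detects_general (n δ : ℕ) (A : AllowableSeq n) (blue : Fin n → Bool)
    (F : Finset (Fin n)) (hF : ∀ x ∈ F, blue x = true)
    (k : ℕ) (γ : ℤ → Fin n) (hγ : A.IsKth F k γ) (t : ℤ)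
    (h1 : A.cweight blue γ t = (δ : ℤ)) (h2 : A.cweight blue γ (t+1) = (δ : ℤ) - 1) :
    ∃ f x : Fin n, f ∈ F ∧ x ∉ F ∧ A.SwapsAt t f x ∧
      (((A.pos t x : ℕ) = (A.pos t f : ℕ) + 1 ∧ blue x = false ∧
          A.BalancedSwap blue (δ : ℤ) t f x ∧
          (F.filter (fun y =>
            (A.pos t y : ℕ) < min (A.pos t f : ℕ) (A.pos t x : ℕ))).card = k - 1) ∨
       ((A.pos t f : ℕ) = (A.pos t x : ℕ) + 1 ∧ blue x = true)) := by
  obtain ⟨p, q, hpq, hstep⟩ := A.adj t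
  have hswap : A.SwapsAt t p q := ⟨ne_of_adjacent hpq, hstep⟩
  have hcard := hγ.card_inter_leftOf (t + 1)
  rw [hstep, ← hγ.card_inter_leftOf t] at hcard
  have hw := h2
  rw [← h1, cweight_eq_sum_leftOf, cweight_eq_sum_leftOf, hstep] at hw
  rcases kth_weight_drop_cases hpq hF (hγ t).1 (hγ (t + 1)).1 hcard hw with
    ⟨hzp, hqF, hq⟩ | ⟨hzq, hpF, hp⟩
  · have hpF : p ∈ F := hzp ▸ (hγ t).1
    refine ⟨p, q, hpF, hqF, hswap, Or.inl ⟨hpq, hq, ⟨hswap, by simp [hF p hpF, hq], ?_⟩, ?_⟩⟩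
    · rw [← sum_filter, filter_lt_min_eq_inter_leftOf hpq, univ_inter, ← hzp,
        ← cweight_eq_sum_leftOf, h1]
    · rw [filter_lt_min_eq_inter_leftOf hpq, ← hzp, hγ.card_inter_leftOf]
  · refine ⟨q, p, hzq ▸ (hγ t).1, hpF, ?_, Or.inr ⟨hpq, hp⟩⟩
    exact ⟨(ne_of_adjacent hpq).symm, Equiv.swap_comm p q ▸ hstep⟩

theorem down_change_detects (n b r δ : ℕ) (A : AllowableSeq n) (blue : Fin n → Bool)
    (hn : n = b + r)
    (hb : (Finset.univ.filter (fun x => blue x = true)).card = b)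
    (hr : (Finset.univ.filter (fun x => blue x = false)).card = r)
    (hbr : b = r + 2 * δ)
    (F : Finset (Fin n)) (hF : ∀ x ∈ F, blue x = true)
    (k : ℕ) (hk1 : 1 ≤ k) (hk2 : k ≤ F.card)
    (γ : ℤ → Fin n) (hγ : A.IsKth F k γ) (t : ℤ)
    (h1 : A.cweight blue γ t = (δ : ℤ)) (h2 : A.cweight blue γ (t+1) = (δ : ℤ) - 1) :
    ∃ f x : Fin n, f ∈ F ∧ x ∉ F ∧ A.SwapsAt t f x ∧
      (((A.pos t x : ℕ) = (A.pos t f : ℕ) + 1 ∧ blue x = false ∧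
          A.BalancedSwap blue (δ : ℤ) t f x ∧
          (F.filter (fun y =>
            (A.pos t y : ℕ) < min (A.pos t f : ℕ) (A.pos t x : ℕ))).card = k - 1) ∨
       ((A.pos t f : ℕ) = (A.pos t x : ℕ) + 1 ∧ blue x = true)) :=
  down_change_detects_general n δ A blue F hF k γ hγ t h1 h2
end

section
/- Let k be an integer with δ+1 ≤ k ≤ ⌊b/2⌋, and suppose that the curve B_k is δ-changing. Then there are at least two distinct balanced transpositions (i.e., at least two distinct unordered pairs of points swapped by balanced transpositions of Π) each of which has exactly k−1 blue points strictly to the left of the transposed pair at the time of the transposition. -/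
open Finset

open AllowableSeq

/-!
The weight of `B_k` changes only when `B_k` is transposed with an adjacent red point: it rises
by one when that point was immediately to its left and drops by one when it was immediately to
its right (a transposition with an adjacent blue point hands the role of `B_k` over to that point
and keeps the weight). The weight is periodic and takes values both `< δ` and `≥ δ`, so it steps
up from `δ - 1` to `δ` at some time and down from `δ` to `δ - 1` at another; both transpositions
are balanced and have exactly the `k - 1` blue points left of `B_k` to their left.

They transpose different pairs. Every pair is transposed exactly once in each window of `C(n,2)`
consecutive moves, since the order is reversed after such a window. Two transpositions of the
same pair in opposite orientations are therefore an odd multiple of `C(n,2)` apart, so the order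
at the second is the reverse of the order at the first, and the blue point would be both the
`k`-th and the `(b + 1 - k)`-th blue point, which is impossible as `2k ≤ b`.
-/

lemma Finset.card_inter_insert_of_notMem {α : Type*} [DecidableEq α] {Q S : Finset α} {a : α}
    (ha : a ∉ S) : #(Q ∩ insert a S) = #(Q ∩ S) + if a ∈ Q then 1 else 0 := by
  rw [insert_inter]
  split_ifs
  · exact card_insert_of_notMem (by simp [ha])
  · rfl

lemma Int.exists_not_and_succ_of_le {P : ℤ → Prop} {a b : ℤ} (hab : a ≤ b) (ha : ¬ P a)
    (hb : P b) : ∃ t, ¬ P t ∧ P (t + 1) := by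
  induction b, hab using Int.leInduction with
  | base => exact absurd hb ha
  | succ m _ ih => by_cases hm : P m; exacts [ih hm, ⟨m, hm, hb⟩]

lemma Function.Periodic.exists_not_and_succ {P : ℤ → Prop} {c : ℤ} (hP : Function.Periodic P c)
    (hc : 0 < c) {a b : ℤ} (ha : ¬ P a) (hb : P b) : ∃ t, ¬ P t ∧ P (t + 1) := by
  refine Int.exists_not_and_succ_of_le (b := b + |a - b| * c) ?_ ha ?_
  · nlinarith [abs_nonneg (a - b), le_abs_self (a - b)]
  · simpa using (hP.int_mul |a - b| b).symm ▸ hb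

namespace AllowableSeq

variable {n : ℕ}

lemma choose_two_pos (A : AllowableSeq n) : 0 < n.choose 2 := by
  obtain ⟨p, q, h, -⟩ := A.adj 0
  exact Nat.choose_pos (by have := (A.pos 0 q).isLt; omega)

section

variable (A : AllowableSeq n)

def AdjSwapAt (t : ℤ) (p q : Fin n) : Prop :=
  (A.pos t q : ℕ) = (A.pos t p : ℕ) + 1 ∧ A.pos (t + 1) = (Equiv.swap p q).trans (A.pos t)

def before (t : ℤ) (y : Fin n) : Finset (Fin n) :=
  univ.filter fun x => A.pos t x < A.pos t y

noncomputable def swappedPair (t : ℤ) : Sym2 (Fin n) :=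
  s((A.adj t).choose, (A.adj t).choose_spec.choose)

lemma exists_adjSwapAt_swappedPair (t : ℤ) :
    ∃ p q, A.swappedPair t = s(p, q) ∧ A.AdjSwapAt t p q :=
  ⟨_, _, rfl, (A.adj t).choose_spec.choose_spec⟩

lemma pos_periodic : Function.Periodic A.pos (2 * n.choose 2) := fun t => by
  ext x
  simp [two_mul, ← add_assoc, A.rev]

lemma swapsAt_periodic (a b : Fin n) :
    Function.Periodic (fun t => A.SwapsAt t a b) (n.choose 2) := fun t => by
  simp only [SwapsAt, add_right_comm t, A.rev, Equiv.ext_iff, Equiv.trans_apply,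
    Fin.revPerm_apply, Fin.rev_inj]

end

variable {A : AllowableSeq n}

lemma notMem_before_self (t : ℤ) (y : Fin n) : y ∉ A.before t y := by
  simp [before]

lemma filter_lt_eq_inter_before (Q : Finset (Fin n)) (t : ℤ) (y : Fin n) :
    Q.filter (fun x => A.pos t x < A.pos t y) = Q ∩ A.before t y := by
  ext x
  simp [before]

lemma cweight_eq_sum_before (blue : Fin n → Bool) (γ : ℤ → Fin n) (t : ℤ) :
    A.cweight blue γ t = ∑ x ∈ A.before t (γ t), wt blue x :=
  (sum_filter _ _).symm

lemma card_inter_before_lt {Q : Finset (Fin n)} {t : ℤ} {y z : Fin n} (hy : y ∈ Q)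
    (hyz : A.pos t y < A.pos t z) : #(Q ∩ A.before t y) < #(Q ∩ A.before t z) := by
  refine card_lt_card ((ssubset_iff_of_subset fun x hx => ?_).2 ⟨y, ?_, ?_⟩)
  · simp only [before, mem_inter, mem_filter, mem_univ, true_and] at hx ⊢
    exact ⟨hx.1, hx.2.trans hyz⟩
  · simp [before, hy, hyz]
  · simp [before]

namespace AdjSwapAt

variable {t : ℤ} {p q : Fin n} (h : A.AdjSwapAt t p q)
include h

lemma ne : p ≠ q := by
  rintro rfl
  have := h.1
  omega

lemma swapsAt : A.SwapsAt t p q := ⟨h.ne, h.2⟩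

lemma pos_succ_apply (x : Fin n) :
    A.pos (t + 1) x = Equiv.swap (A.pos t p) (A.pos t q) (A.pos t x) := by
  rw [h.2, Equiv.trans_apply, Equiv.swap_apply_apply]
  simp

lemma lt_succ_iff {a b : Fin n} (hab : s(p, q) ≠ s(a, b)) :
    A.pos (t + 1) a < A.pos (t + 1) b ↔ A.pos t a < A.pos t b := by
  have hpq : ¬ (A.pos t a = A.pos t p ∧ A.pos t b = A.pos t q) := by
    rintro ⟨ha, hb⟩
    simp_all
  have hqp : ¬ (A.pos t a = A.pos t q ∧ A.pos t b = A.pos t p) := by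
    rintro ⟨ha, hb⟩
    simp_all
  have hadj := h.1
  rw [h.pos_succ_apply, h.pos_succ_apply, Equiv.swap_apply_def, Equiv.swap_apply_def]
  simp only [Fin.ext_iff, Fin.lt_def] at *
  split_ifs <;> omega

lemma before_succ_of_ne {y : Fin n} (hp : y ≠ p) (hq : y ≠ q) :
    A.before (t + 1) y = A.before t y := by
  ext x
  simp only [before, mem_filter, mem_univ, true_and]
  exact h.lt_succ_iff (by simp [hp.symm, hq.symm])

lemma before_succ_right : A.before (t + 1) q = A.before t p := by
  ext x
  have hadj := h.1
  simp only [before, mem_filter, mem_univ, true_and, h.pos_succ_apply, Equiv.swap_apply_def]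
  simp only [Fin.ext_iff, Fin.lt_def] at *
  split_ifs <;> omega

lemma before_succ_left : A.before (t + 1) p = insert q (A.before t p) := by
  ext x
  have hadj := h.1
  simp only [before, mem_insert, mem_filter, mem_univ, true_and, h.pos_succ_apply,
    Equiv.swap_apply_def, ← (A.pos t).apply_eq_iff_eq (x := x) (y := q)]
  simp only [Fin.ext_iff, Fin.lt_def] at *
  split_ifs <;> omega

lemma before_right : A.before t q = insert p (A.before t p) := by
  ext x
  have hadj := h.1
  simp only [before, mem_insert, mem_filter, mem_univ, true_and,
    ← (A.pos t).apply_eq_iff_eq (x := x) (y := p)]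
  simp only [Fin.ext_iff, Fin.lt_def] at *
  omega

lemma right_notMem_before : q ∉ A.before t p := by
  simp only [before, mem_filter, mem_univ, true_and, not_lt, Fin.le_def, h.1]
  omega

lemma card_inter_before_right (Q : Finset (Fin n)) :
    #(Q ∩ A.before t q) = #(Q ∩ A.before t p) + if p ∈ Q then 1 else 0 := by
  rw [h.before_right, card_inter_insert_of_notMem (notMem_before_self t p)]

lemma card_inter_before_succ_left (Q : Finset (Fin n)) :
    #(Q ∩ A.before (t + 1) p) = #(Q ∩ A.before t p) + if q ∈ Q then 1 else 0 := by
  rw [h.before_succ_left, card_inter_insert_of_notMem h.right_notMem_before]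

lemma sum_before_right {M : Type*} [AddCommMonoid M] (f : Fin n → M) :
    ∑ x ∈ A.before t q, f x = f p + ∑ x ∈ A.before t p, f x := by
  rw [h.before_right, sum_insert (notMem_before_self t p)]

lemma sum_before_succ_left {M : Type*} [AddCommMonoid M] (f : Fin n → M) :
    ∑ x ∈ A.before (t + 1) p, f x = f q + ∑ x ∈ A.before t p, f x := by
  rw [h.before_succ_left, sum_insert h.right_notMem_before]

lemma balancedSwap {blue : Fin n → Bool} {δ : ℤ} (hcol : blue p ↔ ¬ blue q)
    (hw : ∑ x ∈ A.before t p, wt blue x = δ) : A.BalancedSwap blue δ t p q := by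
  refine ⟨h.swapsAt, hcol, ?_⟩
  rw [min_eq_left (h.1 ▸ Nat.le_succ _), ← hw, before, sum_filter]
  rfl

lemma blueLeftPair_eq (blue : Fin n → Bool) :
    A.blueLeftPair blue t p q = #((univ.filter fun x => blue x = true) ∩ A.before t p) := by
  rw [blueLeftPair, min_eq_left (h.1 ▸ Nat.le_succ _), ← filter_lt_eq_inter_before,
    filter_filter]
  rfl

end AdjSwapAt

namespace SwapsAt

variable {t : ℤ} {a b : Fin n}

lemma symm (h : A.SwapsAt t a b) : A.SwapsAt t b a :=
  ⟨h.1.symm, Equiv.swap_comm a b ▸ h.2⟩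

lemma sym2_eq {p q : Fin n} (h : A.SwapsAt t a b) (h' : A.SwapsAt t p q) :
    s(a, b) = s(p, q) := by
  have hsw : Equiv.swap a b = Equiv.swap p q := by
    ext x
    exact congrArg Fin.val
      ((A.pos t).injective (by simpa using Equiv.congr_fun (h.2.symm.trans h'.2) x))
  have hb : Equiv.swap p q a = b := by rw [← hsw, Equiv.swap_apply_left]
  rw [Equiv.swap_apply_def] at hb
  split_ifs at hb with hap haq
  · rw [hap, hb]
  · rw [haq, hb, Sym2.eq_swap]
  · exact absurd hb h.1

lemma swappedPair_eq (h : A.SwapsAt t a b) : A.swappedPair t = s(a, b) := by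
  obtain ⟨p, q, hs, h'⟩ := A.exists_adjSwapAt_swappedPair t
  rw [hs, h'.swapsAt.sym2_eq h]

end SwapsAt

-- The relative order of `a` and `b` is reversed after `C(n,2)` moves, and only a move
-- transposing them changes it.
lemma exists_mem_Ico_swappedPair_eq (A : AllowableSeq n) (t : ℤ) {a b : Fin n} (hab : a ≠ b) :
    ∃ u ∈ Ico t (t + n.choose 2), A.swappedPair u = s(a, b) := by
  by_contra! hno
  have hkeep : ∀ d : ℕ, d ≤ n.choose 2 →
      (A.pos (t + d) a < A.pos (t + d) b ↔ A.pos t a < A.pos t b) := by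
    intro d
    induction d with
    | zero => simp
    | succ d ih =>
      intro hd
      obtain ⟨p, q, hs, h⟩ := A.exists_adjSwapAt_swappedPair (t + d)
      have hu : t + d ∈ Ico t (t + n.choose 2) := by
        simp only [mem_Ico]
        omega
      rw [Nat.cast_succ, ← add_assoc, h.lt_succ_iff (hs ▸ hno _ hu), ih (by omega)]
  have hrev := hkeep _ le_rfl
  simp only [A.rev, Equiv.trans_apply, Fin.revPerm_apply, Fin.rev_lt_rev] at hrev
  have hne : A.pos t a ≠ A.pos t b := (A.pos t).injective.ne hab
  omega

-- A window of `C(n,2)` moves transposes every one of the `C(n,2)` pairs, hence each exactly once.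
lemma injOn_swappedPair (A : AllowableSeq n) (t : ℤ) :
    Set.InjOn A.swappedPair (Ico t (t + n.choose 2) : Finset ℤ) := by
  refine injOn_of_surjOn_of_card_le _ (t := univ.filter fun s => ¬ s.IsDiag) ?_ ?_ ?_
  · intro u _
    obtain ⟨p, q, hs, h⟩ := A.exists_adjSwapAt_swappedPair u
    simpa [hs] using h.ne
  · intro s hs
    induction s using Sym2.ind with
    | _ a b => exact A.exists_mem_Ico_swappedPair_eq t (by simpa using hs)
  · rw [Int.card_Ico, ← Fintype.card_subtype, Sym2.card_subtype_not_diag, Fintype.card_fin]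
    simp

lemma SwapsAt.choose_two_dvd_sub {t₁ t₂ : ℤ} {a b : Fin n} (h₁ : A.SwapsAt t₁ a b)
    (h₂ : A.SwapsAt t₂ a b) : (n.choose 2 : ℤ) ∣ t₂ - t₁ := by
  have hC : (0 : ℤ) < n.choose 2 := by exact_mod_cast A.choose_two_pos
  have h₂' : A.SwapsAt (t₁ + (t₂ - t₁) % n.choose 2) a b := by
    have e : t₁ + (t₂ - t₁) % n.choose 2 = t₂ - (t₂ - t₁) / n.choose 2 * n.choose 2 := by
      rw [Int.emod_def]
      ring
    rw [e]
    simpa using (A.swapsAt_periodic a b).sub_int_mul_eq ((t₂ - t₁) / n.choose 2) (x := t₂) ▸ h₂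
  have h₀ := Int.emod_nonneg (t₂ - t₁) hC.ne'
  have hlt := Int.emod_lt_of_pos (t₂ - t₁) hC
  have := A.injOn_swappedPair t₁ (by rw [mem_coe, mem_Ico]; omega)
    (by rw [mem_coe, mem_Ico]; omega) (h₁.swappedPair_eq.trans h₂'.swappedPair_eq.symm)
  exact Int.dvd_of_emod_eq_zero (by omega)

namespace IsKth

variable {Q : Finset (Fin n)} {k : ℕ} {γ : ℤ → Fin n}

lemma mem (hγ : A.IsKth Q k γ) (t : ℤ) : γ t ∈ Q := (hγ t).1

lemma card_inter_before (hγ : A.IsKth Q k γ) (t : ℤ) : #(Q ∩ A.before t (γ t)) = k - 1 := by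
  rw [← filter_lt_eq_inter_before]
  exact (hγ t).2

lemma eq_of_card_inter_before (hγ : A.IsKth Q k γ) {t : ℤ} {y : Fin n} (hy : y ∈ Q)
    (hcard : #(Q ∩ A.before t y) = k - 1) : γ t = y := by
  have hγt := hγ.card_inter_before t
  rcases lt_trichotomy (A.pos t y) (A.pos t (γ t)) with hlt | heq | hgt
  · have := card_inter_before_lt hy hlt
    omega
  · exact (A.pos t).injective heq.symm
  · have := card_inter_before_lt (hγ.mem t) hgt
    omega

lemma eq_of_pos_eq (hγ : A.IsKth Q k γ) {t t' : ℤ} (h : A.pos t' = A.pos t) : γ t' = γ t := by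
  refine (hγ.eq_of_card_inter_before (hγ.mem t') ?_).symm
  rw [← hγ.card_inter_before t', before, before, h]

lemma cweight_periodic (hγ : A.IsKth Q k γ) (blue : Fin n → Bool) :
    Function.Periodic (A.cweight blue γ) (2 * n.choose 2) := fun t => by
  rw [cweight, cweight, hγ.eq_of_pos_eq (A.pos_periodic t), A.pos_periodic t]

lemma apply_add_choose_ne (hγ : A.IsKth Q k γ) (hk : 1 ≤ k) (hQ : 2 * k ≤ #Q) (t : ℤ) :
    γ (t + n.choose 2) ≠ γ t := by
  intro h
  set g := γ t
  have hafter : Q.filter (fun x => ¬ A.pos t x < A.pos t g) =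
      insert g (Q ∩ A.before (t + n.choose 2) g) := by
    ext x
    simp only [mem_filter, before, mem_insert, mem_inter, mem_univ, true_and, not_lt, A.rev,
      Equiv.trans_apply, Fin.revPerm_apply, Fin.rev_lt_rev, le_iff_eq_or_lt,
      (A.pos t).injective.eq_iff]
    constructor
    · rintro ⟨hx, rfl | hlt⟩
      exacts [.inl rfl, .inr ⟨hx, hlt⟩]
    · rintro (rfl | ⟨hx, hlt⟩)
      exacts [⟨hγ.mem t, .inl rfl⟩, ⟨hx, .inr hlt⟩]
  have hsplit := card_filter_add_card_filter_not (s := Q) fun x => A.pos t x < A.pos t g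
  rw [hafter, card_insert_of_notMem (by simp [before]), filter_lt_eq_inter_before,
    hγ.card_inter_before, ← h, hγ.card_inter_before] at hsplit
  omega

lemma apply_ne_of_opposite_adjSwapAt (hγ : A.IsKth Q k γ) (hk : 1 ≤ k) (hQ : 2 * k ≤ #Q)
    {t₁ t₂ : ℤ} {x : Fin n} (h₁ : A.AdjSwapAt t₁ x (γ t₁)) (h₂ : A.AdjSwapAt t₂ (γ t₁) x) :
    γ t₂ ≠ γ t₁ := by
  intro hγ₂
  obtain ⟨j, hj⟩ := h₁.swapsAt.choose_two_dvd_sub h₂.swapsAt.symm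
  obtain ⟨m, rfl | rfl⟩ := Int.even_or_odd' j
  · have hpos : A.pos t₂ = A.pos t₁ := by
      rw [show t₂ = t₁ + m * (2 * n.choose 2) by linarith]
      exact A.pos_periodic.int_mul m t₁
    have := h₁.1
    have := h₂.1
    rw [hpos] at *
    omega
  · have hpos : A.pos t₂ = A.pos (t₁ + n.choose 2) := by
      rw [show t₂ = t₁ + n.choose 2 + m * (2 * n.choose 2) by linarith]
      exact A.pos_periodic.int_mul m _
    exact hγ.apply_add_choose_ne hk hQ t₁ (hγ.eq_of_pos_eq hpos ▸ hγ₂)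

variable {blue : Fin n → Bool} (hγ : A.IsKth (univ.filter fun x => blue x = true) k γ)
include hγ

lemma blue_apply (t : ℤ) : blue (γ t) = true := (mem_filter.1 (hγ.mem t)).2

lemma cweight_succ_cases {t : ℤ} {p q : Fin n} (h : A.AdjSwapAt t p q) :
    (γ t = q ∧ blue p = false ∧ A.cweight blue γ (t + 1) = A.cweight blue γ t + 1) ∨
    (γ t = p ∧ blue q = false ∧ A.cweight blue γ (t + 1) = A.cweight blue γ t - 1) ∨
    A.cweight blue γ (t + 1) = A.cweight blue γ t := by
  have hQ : ∀ x, x ∈ univ.filter (fun x => blue x = true) ↔ blue x = true := by simp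
  have hcw := A.cweight_eq_sum_before blue γ
  have hk := hγ.card_inter_before t
  by_cases hγq : γ t = q
  · subst hγq
    rw [h.card_inter_before_right] at hk
    have hw := h.sum_before_right (wt blue)
    cases hbp : blue p
    · have hγ' := hγ.eq_of_card_inter_before (hγ.mem t) (t := t + 1)
        (by rw [h.before_succ_right]; simpa [hbp] using hk)
      refine .inl ⟨rfl, rfl, ?_⟩
      rw [hcw, hcw, hγ', h.before_succ_right, hw]
      simp [wt, hbp]
    · have hγ' := hγ.eq_of_card_inter_before ((hQ p).2 hbp) (t := t + 1)
        (by rw [h.card_inter_before_succ_left]; simpa [hbp, hγ.blue_apply] using hk)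
      refine .inr (.inr ?_)
      rw [hcw, hcw, hγ', h.sum_before_succ_left, hw]
      simp [wt, hbp, hγ.blue_apply]
  · by_cases hγp : γ t = p
    · subst hγp
      cases hbq : blue q
      · have hγ' := hγ.eq_of_card_inter_before (hγ.mem t) (t := t + 1)
          (by rw [h.card_inter_before_succ_left]; simpa [hbq] using hk)
        refine .inr (.inl ⟨rfl, rfl, ?_⟩)
        rw [hcw, hcw, hγ', h.sum_before_succ_left, wt, hbq]
        simp only [Bool.false_eq_true, if_false]
        ring
      · have hγ' := hγ.eq_of_card_inter_before ((hQ q).2 hbq) (t := t + 1)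
          (by rw [h.before_succ_right]; exact hk)
        refine .inr (.inr ?_)
        rw [hcw, hcw, hγ', h.before_succ_right]
    · have hsame := h.before_succ_of_ne hγp hγq
      have hγ' := hγ.eq_of_card_inter_before (hγ.mem t) (hsame ▸ hk)
      refine .inr (.inr ?_)
      rw [hcw, hcw, hγ', hsame]

lemma exists_balancedSwap_of_lt_of_le {t δ : ℤ} (hlt : A.cweight blue γ t < δ)
    (hle : δ ≤ A.cweight blue γ (t + 1)) :
    ∃ x, blue x = false ∧ A.AdjSwapAt t x (γ t) ∧ A.BalancedSwap blue δ t x (γ t) ∧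
      A.blueLeftPair blue t x (γ t) = k - 1 := by
  obtain ⟨p, q, h⟩ : ∃ p q, A.AdjSwapAt t p q := A.adj t
  rcases hγ.cweight_succ_cases h with ⟨rfl, hp, hw⟩ | ⟨-, -, hw⟩ | hw
  · refine ⟨p, hp, h, h.balancedSwap (by simp [hp, hγ.blue_apply]) ?_, ?_⟩
    · have := h.sum_before_right (wt blue)
      rw [← cweight_eq_sum_before, wt, hp] at this
      simp only [Bool.false_eq_true, if_false] at this
      linarith
    · rw [h.blueLeftPair_eq, ← hγ.card_inter_before t, h.card_inter_before_right]
      simp [hp]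
  all_goals omega

lemma exists_balancedSwap_of_le_of_lt {t δ : ℤ} (hle : δ ≤ A.cweight blue γ t)
    (hlt : A.cweight blue γ (t + 1) < δ) :
    ∃ x, blue x = false ∧ A.AdjSwapAt t (γ t) x ∧ A.BalancedSwap blue δ t (γ t) x ∧
      A.blueLeftPair blue t (γ t) x = k - 1 := by
  obtain ⟨p, q, h⟩ : ∃ p q, A.AdjSwapAt t p q := A.adj t
  rcases hγ.cweight_succ_cases h with ⟨-, -, hw⟩ | ⟨rfl, hq, hw⟩ | hw
  · omega
  · refine ⟨q, hq, h, h.balancedSwap (by simp [hq, hγ.blue_apply]) ?_, ?_⟩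
    · rw [← cweight_eq_sum_before]
      omega
    · rw [h.blueLeftPair_eq, hγ.card_inter_before]
  · omega

end IsKth

end AllowableSeq

theorem two_balanced_from_changing_Bk_general (n b δ : ℕ) (A : AllowableSeq n) (blue : Fin n → Bool)
    (hb : (Finset.univ.filter (fun x => blue x = true)).card = b)
    (k : ℕ) (hk1 : δ + 1 ≤ k) (hk2 : k ≤ b / 2)
    (γ : ℤ → Fin n) (hγ : A.IsKth (Finset.univ.filter (fun x => blue x = true)) k γ)
    (hchg : ¬ (∀ t : ℤ, (δ : ℤ) ≤ A.cweight blue γ t) ∧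
            ¬ (∀ t : ℤ, A.cweight blue γ t < (δ : ℤ))) :
    ∃ (p₁ q₁ : Fin n) (t₁ : ℤ) (p₂ q₂ : Fin n) (t₂ : ℤ),
      A.BalancedSwap blue (δ : ℤ) t₁ p₁ q₁ ∧ A.blueLeftPair blue t₁ p₁ q₁ = k - 1 ∧
      A.BalancedSwap blue (δ : ℤ) t₂ p₂ q₂ ∧ A.blueLeftPair blue t₂ p₂ q₂ = k - 1 ∧
      s(p₁, q₁) ≠ s(p₂, q₂) := by
  obtain ⟨⟨ta, hta⟩, ⟨tb, htb⟩⟩ :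
      (∃ t, A.cweight blue γ t < δ) ∧ ∃ t, δ ≤ A.cweight blue γ t := by
    simpa using hchg
  have hper := hγ.cweight_periodic blue
  have hC : (0 : ℤ) < 2 * n.choose 2 := by
    have := A.choose_two_pos
    omega
  obtain ⟨t₁, hlt₁, hge₁⟩ :=
    (hper.comp fun w => (δ : ℤ) ≤ w).exists_not_and_succ hC (not_le.2 hta) htb
  obtain ⟨t₂, hge₂, hlt₂⟩ :=
    (hper.comp fun w => w < (δ : ℤ)).exists_not_and_succ hC (not_lt.2 htb) hta
  obtain ⟨x₁, hx₁, h₁, hbal₁, hleft₁⟩ := hγ.exists_balancedSwap_of_lt_of_le (not_le.1 hlt₁) hge₁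
  obtain ⟨x₂, -, h₂, hbal₂, hleft₂⟩ := hγ.exists_balancedSwap_of_le_of_lt (not_lt.1 hge₂) hlt₂
  refine ⟨x₁, γ t₁, t₁, γ t₂, x₂, t₂, hbal₁, hleft₁, hbal₂, hleft₂, ?_⟩
  rw [Ne, Sym2.eq_iff]
  rintro (⟨hx, -⟩ | ⟨rfl, hg⟩)
  · simp [hx, hγ.blue_apply] at hx₁
  · exact hγ.apply_ne_of_opposite_adjSwapAt (by omega) (by omega) h₁ (hg ▸ h₂) hg.symm

theorem two_balanced_from_changing_Bk (n b r δ : ℕ) (A : AllowableSeq n) (blue : Fin n → Bool)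
    (hn : n = b + r)
    (hb : (Finset.univ.filter (fun x => blue x = true)).card = b)
    (hr : (Finset.univ.filter (fun x => blue x = false)).card = r)
    (hbr : b = r + 2 * δ)
    (k : ℕ) (hk1 : δ + 1 ≤ k) (hk2 : k ≤ b / 2)
    (γ : ℤ → Fin n) (hγ : A.IsKth (Finset.univ.filter (fun x => blue x = true)) k γ)
    (hchg : ¬ (∀ t : ℤ, (δ : ℤ) ≤ A.cweight blue γ t) ∧
            ¬ (∀ t : ℤ, A.cweight blue γ t < (δ : ℤ))) :
    ∃ (p₁ q₁ : Fin n) (t₁ : ℤ) (p₂ q₂ : Fin n) (t₂ : ℤ),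
      A.BalancedSwap blue (δ : ℤ) t₁ p₁ q₁ ∧ A.blueLeftPair blue t₁ p₁ q₁ = k - 1 ∧
      A.BalancedSwap blue (δ : ℤ) t₂ p₂ q₂ ∧ A.blueLeftPair blue t₂ p₂ q₂ = k - 1 ∧
      s(p₁, q₁) ≠ s(p₂, q₂) :=
  two_balanced_from_changing_Bk_general n b δ A blue hb k hk1 hk2 γ hγ hchg
end

section
/- Suppose b is odd and let k₀ := (b+1)/2. Then there is at least one balanced transposition of Π that has exactly k₀ − 1 blue points strictly to the left of the transposed pair at the time of the transposition. -/
open Finset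

open AllowableSeq

/-! Let `g t` be the weight of the left half (the first `n / 2 = r + δ` points) of `π^t`. It has
`g t - δ = 2 · #(blue points in the left half) - b`, which is odd, so `g` never takes the value `δ`.
After `C(n,2)` steps the ordering is reversed, so `g (C(n,2)) = 2δ - g 0` lies on the other side
of `δ`, and `g` crosses `δ` at some step. Only a transposition of the two middle points changes
`g`, by the difference of their weights; since weights are `±1`, at the crossing the two points
have different colours and the `r + δ - 1` points to their left have weight exactly `δ`, hence
`(b - 1) / 2` of them are blue. -/

lemma exists_crossing_of_forall_ne {f : ℤ → ℤ} {c : ℤ} {N : ℕ} (hf : ∀ t, f t ≠ c)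
    (hN : f 0 < c ↔ c < f N) : ∃ t : ℤ, min (f t) (f (t + 1)) < c ∧ c < max (f t) (f (t + 1)) := by
  obtain ⟨i, hi, hi1⟩ := Nat.exists_not_and_succ_of_not_zero_of_exists
    (p := fun i : ℕ => (f i < c ↔ c < f 0)) (by have := hf 0; simp only [Nat.cast_zero]; omega)
    ⟨N, by have := hf 0; have := hf N; omega⟩
  refine ⟨i, ?_⟩
  have := hf i
  have := hf (i + 1)
  have := hf 0
  push_cast at hi hi1
  omega

namespace AllowableSeq

variable {n : ℕ} (A : AllowableSeq n) (blue : Fin n → Bool)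

lemma wt_eq_one_or_neg_one (x : Fin n) : wt blue x = 1 ∨ wt blue x = -1 := by
  unfold wt; split_ifs <;> simp

lemma sum_wt (s : Finset (Fin n)) :
    ∑ x ∈ s, wt blue x = 2 * (#{x ∈ s | blue x = true} : ℤ) - #s := by
  have h : ∀ x, wt blue x = 2 * (if blue x = true then 1 else 0) - 1 := by
    intro x; unfold wt; split_ifs <;> simp
  rw [Finset.sum_congr rfl fun x _ => h x, Finset.sum_sub_distrib, ← Finset.mul_sum,
    Finset.sum_boole]
  simp

lemma card_filter_perm_val_lt (σ : Equiv.Perm (Fin n)) {m : ℕ} (hm : m ≤ n) :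
    #{x | (σ x : ℕ) < m} = m := by
  rw [Finset.card_equiv σ (t := {i : Fin n | (i : ℕ) < m}) (by simp), Fin.card_filter_val_lt,
    min_eq_right hm]

def prefixWeight (t : ℤ) (m : ℕ) : ℤ :=
  ∑ x : Fin n, if (A.pos t x : ℕ) < m then wt blue x else 0

def blueBefore (t : ℤ) (m : ℕ) : ℕ :=
  #{y | blue y = true ∧ (A.pos t y : ℕ) < m}

lemma prefixWeight_eq {t : ℤ} {m : ℕ} (hm : m ≤ n) :
    A.prefixWeight blue t m = 2 * (A.blueBefore blue t m : ℤ) - m := by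
  rw [prefixWeight, ← Finset.sum_filter, sum_wt, card_filter_perm_val_lt _ hm, blueBefore,
    Finset.filter_filter]
  simp only [and_comm]

lemma prefixWeight_pos_add_one (t : ℤ) (x : Fin n) :
    A.prefixWeight blue t (A.pos t x + 1) = A.prefixWeight blue t (A.pos t x) + wt blue x := by
  have hsplit : univ.filter (fun y => (A.pos t y : ℕ) < A.pos t x + 1)
      = insert x (univ.filter fun y => (A.pos t y : ℕ) < A.pos t x) := by
    ext y
    simp only [Finset.mem_insert, Finset.mem_filter, Finset.mem_univ, true_and,
      Nat.lt_succ_iff_lt_or_eq, Fin.val_inj, (A.pos t).apply_eq_iff_eq]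
    tauto
  rw [prefixWeight, prefixWeight, ← Finset.sum_filter, ← Finset.sum_filter, hsplit,
    Finset.sum_insert (by simp), add_comm]

lemma prefixWeight_add_choose {t : ℤ} {m : ℕ} (hm : m ≤ n) :
    A.prefixWeight blue (t + n.choose 2) m = ∑ x, wt blue x - A.prefixWeight blue t (n - m) := by
  rw [prefixWeight, prefixWeight, ← Finset.sum_sub_distrib]
  refine Finset.sum_congr rfl fun x _ => ?_
  have hx := (A.pos t x).is_lt
  simp only [A.rev t, Equiv.trans_apply, Fin.revPerm_apply, Fin.val_rev]
  split_ifs <;> first | (exfalso; omega) | ring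

variable {A} in
lemma prefixWeight_succ_of_same_side {t : ℤ} {p q : Fin n} {m : ℕ}
    (hswap : A.pos (t + 1) = (Equiv.swap p q).trans (A.pos t))
    (hside : (A.pos t p : ℕ) < m ↔ (A.pos t q : ℕ) < m) :
    A.prefixWeight blue (t + 1) m = A.prefixWeight blue t m := by
  refine Finset.sum_congr rfl fun x _ => ?_
  rw [hswap, Equiv.trans_apply]
  rcases eq_or_ne x p with rfl | hp
  · simp only [Equiv.swap_apply_left, hside]
  rcases eq_or_ne x q with rfl | hq
  · simp only [Equiv.swap_apply_right, hside]
  · rw [Equiv.swap_apply_of_ne_of_ne hp hq]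

lemma exists_balancedSwap_of_crossing {t : ℤ} {m : ℕ} {δ : ℤ}
    (hcross : min (A.prefixWeight blue t m) (A.prefixWeight blue (t + 1) m) < δ ∧
      δ < max (A.prefixWeight blue t m) (A.prefixWeight blue (t + 1) m)) :
    ∃ p q : Fin n, A.BalancedSwap blue δ t p q ∧ min (A.pos t p : ℕ) (A.pos t q) + 1 = m := by
  obtain ⟨p, q, hpq, hswap⟩ := A.adj t
  have hmid : (A.pos t q : ℕ) = m := by
    by_contra hm
    rw [prefixWeight_succ_of_same_side blue hswap (by omega)] at hcross
    omega
  have hbefore : A.prefixWeight blue t m = A.prefixWeight blue t (A.pos t p) + wt blue p := by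
    rw [← hmid, hpq, prefixWeight_pos_add_one]
  have hafter : A.prefixWeight blue (t + 1) m = A.prefixWeight blue t (A.pos t p) + wt blue q := by
    have hq' : A.pos (t + 1) q = A.pos t p := by simp [hswap]
    rw [← hmid, hpq, ← hq', prefixWeight_pos_add_one, hq',
      prefixWeight_succ_of_same_side blue hswap (by omega)]
  refine ⟨p, q, ⟨⟨fun h => by simp [h] at hpq, hswap⟩, ?_, ?_⟩, by omega⟩
  · have hwt : wt blue p ≠ wt blue q := by omega
    revert hwt
    unfold wt
    cases blue p <;> cases blue q <;> simp
  · change A.prefixWeight blue t _ = δ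
    rw [min_eq_left (by omega)]
    rcases wt_eq_one_or_neg_one blue p with hp | hp <;>
    rcases wt_eq_one_or_neg_one blue q with hq | hq <;> omega

end AllowableSeq

theorem odd_middle_balanced_general (n b r δ : ℕ) (A : AllowableSeq n) (blue : Fin n → Bool)
    (hn : n = b + r)
    (hb : (Finset.univ.filter (fun x => blue x = true)).card = b)
    (hbr : b = r + 2 * δ)
    (hodd : Odd b) :
    ∃ (p q : Fin n) (t : ℤ),
      A.BalancedSwap blue (δ : ℤ) t p q ∧ A.blueLeftPair blue t p q = (b + 1) / 2 - 1 := by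
  obtain ⟨k, rfl⟩ := hodd
  have hm : r + δ ≤ n := by omega
  have hne : ∀ t, A.prefixWeight blue t (r + δ) ≠ δ := fun t h => by
    rw [prefixWeight_eq A blue hm] at h
    omega
  have hrev := A.prefixWeight_add_choose blue (t := 0) hm
  rw [zero_add, sum_wt, Finset.card_univ, Fintype.card_fin, hb,
    show n - (r + δ) = r + δ by omega] at hrev
  obtain ⟨t, hcross⟩ := exists_crossing_of_forall_ne hne (N := n.choose 2)
    (by have := hne 0; omega)
  obtain ⟨p, q, hbal, hpos⟩ := A.exists_balancedSwap_of_crossing blue hcross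
  have hleft : A.prefixWeight blue t (min (A.pos t p) (A.pos t q)) = δ := hbal.2.2
  rw [prefixWeight_eq A blue (by omega)] at hleft
  refine ⟨p, q, t, hbal, ?_⟩
  change A.blueBefore blue t _ = _
  omega

theorem odd_middle_balanced (n b r δ : ℕ) (A : AllowableSeq n) (blue : Fin n → Bool)
    (hn : n = b + r)
    (hb : (Finset.univ.filter (fun x => blue x = true)).card = b)
    (hr : (Finset.univ.filter (fun x => blue x = false)).card = r)
    (hbr : b = r + 2 * δ)
    (hodd : Odd b) :
    ∃ (p q : Fin n) (t : ℤ),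
      A.BalancedSwap blue (δ : ℤ) t p q ∧ A.blueLeftPair blue t p q = (b + 1) / 2 - 1 :=
  odd_middle_balanced_general n b r δ A blue hn hb hbr hodd
end

section
/- Suppose that for some integer k with δ+1 ≤ k ≤ ⌊b/2⌋ the curve B_k is δ-preserving. Then there exists a border. Specifically, if B_k is ≥δ then B_k itself is a border, and if B_k is <δ then the curve ρ defined by letting ρ(t) be the red point closest to B_k(t) among the red points lying to the left of B_k(t) in π^t is well-defined and is a border. -/
open Finset

open AllowableSeq


/-!
`B_k` is periodic, and since `2k ≤ b` it lies to the left of its mirror curve `B_{b+1-k}`.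
A single step of an allowable sequence changes the relative order of exactly one pair of
points, the adjacent pair `p, q` it transposes; so `B_k` can only move onto its blue neighbour,
with nothing in between. For `ρ`, a red point strictly between `ρ t` and `ρ (t+1)` would make
some pair other than `p, q` change order, contradict the maximality defining `ρ`, or sit between
`p` and `q`. Finally the points from `ρ t` up to `B_k t` are `ρ t` and blue points, so the weight
of `ρ` exceeds that of `B_k` by at most one, and when the weight `(k-1) - #reds` of `B_k` is
below `δ ≤ k - 1` some red point lies to its left, so `ρ` exists.
-/

lemma min_lt_and_lt_max_iff {α : Type*} [LinearOrder α] {a b x : α} :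
    (min a b < x ∧ x < max a b) ↔ (a < x ∧ x < b) ∨ (b < x ∧ x < a) := by
  change x ∈ Set.uIoo a b ↔ x ∈ Set.Ioo a b ∨ x ∈ Set.Ioo b a
  rw [Set.uIoo_eq_union, Set.mem_union]

namespace AllowableSeq

variable {n : ℕ}

section

variable (A : AllowableSeq n)

lemma pos_add_two_mul_choose (t : ℤ) : A.pos (t + 2 * (n.choose 2 : ℤ)) = A.pos t := by
  rw [show t + 2 * (n.choose 2 : ℤ) = t + n.choose 2 + n.choose 2 by ring, A.rev, A.rev]
  ext x
  simp

lemma pos_lt_pos_iff_sub_choose (t : ℤ) (x y : Fin n) :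
    A.pos t x < A.pos t y ↔ A.pos (t - n.choose 2) y < A.pos (t - n.choose 2) x := by
  have h := A.rev (t - n.choose 2)
  rw [sub_add_cancel] at h
  simp [h, Fin.rev_lt_rev]

lemma pos_lt_or_gt {x y : Fin n} (t : ℤ) (h : x ≠ y) :
    A.pos t x < A.pos t y ∨ A.pos t y < A.pos t x :=
  lt_or_gt_of_ne ((A.pos t).injective.ne h)

def countLeft (Q : Finset (Fin n)) (t : ℤ) (x : Fin n) : ℕ :=
  #{y ∈ Q | A.pos t y < A.pos t x}

lemma countLeft_add_two_mul_choose (Q : Finset (Fin n)) (t : ℤ) (x : Fin n) :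
    A.countLeft Q (t + 2 * (n.choose 2 : ℤ)) x = A.countLeft Q t x := by
  rw [countLeft, countLeft, pos_add_two_mul_choose]

end

section

variable {A : AllowableSeq n} {Q : Finset (Fin n)} {t : ℤ} {x y : Fin n}

lemma countLeft_mono (h : A.pos t x ≤ A.pos t y) : A.countLeft Q t x ≤ A.countLeft Q t y :=
  card_le_card fun z hz => by
    simp only [mem_filter] at hz ⊢
    exact ⟨hz.1, hz.2.trans_le h⟩

lemma countLeft_lt_countLeft (hx : x ∈ Q) (h : A.pos t x < A.pos t y) :
    A.countLeft Q t x < A.countLeft Q t y := by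
  refine card_lt_card ⟨fun z hz => ?_, fun hsub => ?_⟩
  · simp only [mem_filter] at hz ⊢
    exact ⟨hz.1, hz.2.trans h⟩
  · exact (mem_filter.mp (hsub (mem_filter.mpr ⟨hx, h⟩))).2.false

lemma pos_lt_of_countLeft_lt (h : A.countLeft Q t x < A.countLeft Q t y) :
    A.pos t x < A.pos t y :=
  lt_of_not_ge fun hyx => (countLeft_mono hyx).not_gt h

lemma eq_of_countLeft_eq (hx : x ∈ Q) (hy : y ∈ Q)
    (h : A.countLeft Q t x = A.countLeft Q t y) : x = y := by
  by_contra hxy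
  rcases A.pos_lt_or_gt t hxy with hlt | hlt
  · exact (countLeft_lt_countLeft hx hlt).ne h
  · exact (countLeft_lt_countLeft hy hlt).ne h.symm

lemma countLeft_add_countLeft_sub_choose (hx : x ∈ Q) :
    A.countLeft Q t x + A.countLeft Q (t - n.choose 2) x + 1 = #Q := by
  have hright : A.countLeft Q (t - n.choose 2) x = #{y ∈ Q | A.pos t x < A.pos t y} := by
    simp only [countLeft, A.pos_lt_pos_iff_sub_choose t x]
  have hsplit :
      {y ∈ Q | A.pos t y < A.pos t x} ∪ {y ∈ Q | A.pos t x < A.pos t y} = Q.erase x := by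
    ext y
    simp only [mem_union, mem_filter, mem_erase]
    constructor
    · rintro (⟨hy, h⟩ | ⟨hy, h⟩)
      · exact ⟨fun e => (e ▸ h).false, hy⟩
      · exact ⟨fun e => (e ▸ h).false, hy⟩
    · rintro ⟨hne, hy⟩
      rcases A.pos_lt_or_gt t hne with h | h
      · exact Or.inl ⟨hy, h⟩
      · exact Or.inr ⟨hy, h⟩
  have hdisj : Disjoint {y ∈ Q | A.pos t y < A.pos t x} {y ∈ Q | A.pos t x < A.pos t y} :=
    disjoint_filter.mpr fun _ _ h h' => (h.trans h').false
  rw [hright, countLeft, ← card_union_of_disjoint hdisj, hsplit, card_erase_add_one hx]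

end

def StepAt (A : AllowableSeq n) (t : ℤ) (p q : Fin n) : Prop :=
  (A.pos t q : ℕ) = A.pos t p + 1 ∧ A.pos (t + 1) = (Equiv.swap p q).trans (A.pos t)

lemma exists_stepAt (A : AllowableSeq n) (t : ℤ) : ∃ p q, A.StepAt t p q := A.adj t

namespace StepAt

variable {A : AllowableSeq n} {t : ℤ} {p q w y z : Fin n}

lemma pos_succ_left (h : A.StepAt t p q) : A.pos (t + 1) p = A.pos t q := by
  rw [h.2, Equiv.trans_apply, Equiv.swap_apply_left]

lemma pos_succ_right (h : A.StepAt t p q) : A.pos (t + 1) q = A.pos t p := by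
  rw [h.2, Equiv.trans_apply, Equiv.swap_apply_right]

lemma pos_succ_of_ne (h : A.StepAt t p q) (hp : w ≠ p) (hq : w ≠ q) :
    A.pos (t + 1) w = A.pos t w := by
  rw [h.2, Equiv.trans_apply, Equiv.swap_apply_of_ne_of_ne hp hq]

lemma pos_lt (h : A.StepAt t p q) : A.pos t p < A.pos t q := by
  rw [Fin.lt_def, h.1]
  exact Nat.lt_succ_self _

lemma not_between (h : A.StepAt t p q) :
    ¬ (A.pos t p < A.pos t w ∧ A.pos t w < A.pos t q) := by
  rw [Fin.lt_def, Fin.lt_def, h.1]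
  omega

lemma not_between_succ (h : A.StepAt t p q) :
    ¬ (A.pos (t + 1) q < A.pos (t + 1) w ∧ A.pos (t + 1) w < A.pos (t + 1) p) := by
  rw [h.pos_succ_left, h.pos_succ_right, Fin.lt_def, Fin.lt_def, h.1]
  omega

lemma not_min_lt_and_lt_max_succ (h : A.StepAt t p q) :
    ¬ (min (A.pos (t + 1) p) (A.pos (t + 1) q) < A.pos (t + 1) w ∧
      A.pos (t + 1) w < max (A.pos (t + 1) p) (A.pos (t + 1) q)) := by
  rw [min_lt_and_lt_max_iff]
  rintro (⟨hpw, hwq⟩ | hqwp)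
  · rw [h.pos_succ_left, h.pos_succ_right] at *
    exact ((hpw.trans hwq).trans h.pos_lt).false
  · exact h.not_between_succ hqwp

lemma eq_of_lt_of_succ_lt (h : A.StepAt t p q) (h1 : A.pos t y < A.pos t z)
    (h2 : A.pos (t + 1) z < A.pos (t + 1) y) : y = p ∧ z = q := by
  rcases eq_or_ne y p with rfl | hyp
  · refine ⟨rfl, ?_⟩
    by_contra hzq
    have hzy : z ≠ y := by rintro rfl; exact h1.false
    rw [h.pos_succ_of_ne hzy hzq, h.pos_succ_left] at h2
    exact h.not_between ⟨h1, h2⟩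
  exfalso
  rcases eq_or_ne y q with rfl | hyq
  · rw [h.pos_succ_right] at h2
    rcases eq_or_ne z p with rfl | hzp
    · exact (h1.trans h.pos_lt).false
    have hzy : z ≠ y := by rintro rfl; exact h1.false
    rw [h.pos_succ_of_ne hzp hzy] at h2
    exact ((h.pos_lt.trans h1).trans h2).false
  rw [h.pos_succ_of_ne hyp hyq] at h2
  rcases eq_or_ne z p with rfl | hzp
  · rw [h.pos_succ_left] at h2
    exact ((h1.trans h.pos_lt).trans h2).false
  rcases eq_or_ne z q with rfl | hzq
  · rw [h.pos_succ_right] at h2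
    exact h.not_between ⟨h2, h1⟩
  rw [h.pos_succ_of_ne hzp hzq] at h2
  exact (h1.trans h2).false

lemma succ_lt_succ_iff (h : A.StepAt t p q) (hyz : ¬ (y = p ∧ z = q))
    (hzy : ¬ (z = p ∧ y = q)) : A.pos (t + 1) y < A.pos (t + 1) z ↔ A.pos t y < A.pos t z := by
  constructor
  · intro h2
    by_contra h1
    have hzy' : z ≠ y := by rintro rfl; exact h2.false
    exact hzy (h.eq_of_lt_of_succ_lt ((A.pos_lt_or_gt t hzy').resolve_right h1) h2)
  · intro h1
    by_contra h2
    have hzy' : z ≠ y := by rintro rfl; exact h1.false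
    exact hyz (h.eq_of_lt_of_succ_lt h1 ((A.pos_lt_or_gt (t + 1) hzy').resolve_right h2))

lemma succ_lt_succ_iff_of_left (h : A.StepAt t p q) (hp : y ≠ p) (hq : y ≠ q) :
    A.pos (t + 1) y < A.pos (t + 1) z ↔ A.pos t y < A.pos t z :=
  h.succ_lt_succ_iff (fun e => hp e.1) (fun e => hq e.2)

lemma succ_lt_succ_iff_of_right (h : A.StepAt t p q) (hp : z ≠ p) (hq : z ≠ q) :
    A.pos (t + 1) y < A.pos (t + 1) z ↔ A.pos t y < A.pos t z :=
  h.succ_lt_succ_iff (fun e => hq e.2) (fun e => hp e.1)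

lemma countLeft_succ (h : A.StepAt t p q) (Q : Finset (Fin n)) (hp : z ≠ p) (hq : z ≠ q) :
    A.countLeft Q (t + 1) z = A.countLeft Q t z := by
  unfold countLeft
  congr 1
  exact filter_congr fun y _ => h.succ_lt_succ_iff_of_right hp hq

end StepAt

namespace IsKth

variable {A : AllowableSeq n} {Q : Finset (Fin n)} {k : ℕ} {γ : ℤ → Fin n}

lemma countLeft_eq (hγ : A.IsKth Q k γ) (t : ℤ) : A.countLeft Q t (γ t) = k - 1 := (hγ t).2

lemma isCurve (hγ : A.IsKth Q k γ) : A.IsCurve γ := fun t => by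
  refine A.eq_of_countLeft_eq (t := t) (hγ _).1 (hγ t).1 ?_
  rw [← A.countLeft_add_two_mul_choose, hγ.countLeft_eq, hγ.countLeft_eq]

/-- The mirror curve of `Q_k` is `Q_{|Q|+1-k}`. -/
lemma pos_lt_mirror (hγ : A.IsKth Q k γ) (hk : 0 < k) (h2k : 2 * k ≤ #Q) (t : ℤ) :
    A.pos t (γ t) < A.pos t (mirror γ t) := by
  apply pos_lt_of_countLeft_lt (Q := Q)
  have := countLeft_add_countLeft_sub_choose (A := A) (t := t) (hγ (t - n.choose 2)).1
  rw [mirror, hγ.countLeft_eq]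
  rw [hγ.countLeft_eq] at this
  omega

lemma eq_or_eq_of_stepAt (hγ : A.IsKth Q k γ) {t : ℤ} {p q : Fin n} (h : A.StepAt t p q) :
    γ (t + 1) = γ t ∨ (γ t = p ∧ γ (t + 1) = q) ∨ (γ t = q ∧ γ (t + 1) = p) := by
  by_cases hmove : γ (t + 1) = γ t
  · exact Or.inl hmove
  have hmem : γ t = p ∨ γ t = q := by
    by_contra! hpq
    refine hmove (A.eq_of_countLeft_eq (t := t + 1) (hγ _).1 (hγ t).1 ?_)
    rw [hγ.countLeft_eq, h.countLeft_succ Q hpq.1 hpq.2, hγ.countLeft_eq]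
  have hmem' : γ (t + 1) = p ∨ γ (t + 1) = q := by
    by_contra! hpq
    refine hmove (A.eq_of_countLeft_eq (t := t) (hγ _).1 (hγ t).1 ?_)
    rw [← h.countLeft_succ Q hpq.1 hpq.2, hγ.countLeft_eq, hγ.countLeft_eq]
  rcases hmem with hp | hq <;> rcases hmem' with hp' | hq'
  · exact absurd (hp'.trans hp.symm) hmove
  · exact Or.inr (Or.inl ⟨hp, hq'⟩)
  · exact Or.inr (Or.inr ⟨hq, hp'⟩)
  · exact absurd (hq'.trans hq.symm) hmove

lemma not_between_succ (hγ : A.IsKth Q k γ) (t : ℤ) (w : Fin n) (hmove : γ (t + 1) ≠ γ t) :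
    ¬ (min (A.pos (t + 1) (γ t)) (A.pos (t + 1) (γ (t + 1))) < A.pos (t + 1) w ∧
      A.pos (t + 1) w < max (A.pos (t + 1) (γ t)) (A.pos (t + 1) (γ (t + 1)))) := by
  obtain ⟨p, q, h⟩ := A.exists_stepAt t
  rcases hγ.eq_or_eq_of_stepAt h with hstay | ⟨hp, hq⟩ | ⟨hq, hp⟩
  · exact absurd hstay hmove
  · rw [hp, hq]
    exact h.not_min_lt_and_lt_max_succ
  · rw [hp, hq, min_comm, max_comm]
    exact h.not_min_lt_and_lt_max_succ

end IsKth

variable {A : AllowableSeq n} {blue : Fin n → Bool} {k : ℕ} {γ ρ : ℤ → Fin n}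

lemma cweight_eq_sub (A : AllowableSeq n) (blue : Fin n → Bool) (γ : ℤ → Fin n) (t : ℤ) :
    A.cweight blue γ t = (A.countLeft {x | blue x = true} t (γ t) : ℤ) -
      A.countLeft {x | blue x = false} t (γ t) := by
  have hsplit : ∀ x ∈ univ.filter (fun y => A.pos t y < A.pos t (γ t)),
      wt blue x = (if blue x = true then 1 else 0) - (if blue x = false then 1 else 0) := by
    intro x _
    cases hx : blue x <;> simp [wt, hx]
  rw [cweight, ← sum_filter, sum_congr rfl hsplit, sum_sub_distrib, sum_boole, sum_boole,
    filter_filter, filter_filter, countLeft, countLeft, filter_filter, filter_filter]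
  simp only [and_comm]

lemma IsKth.ne_of_red (hγ : A.IsKth {x | blue x = true} k γ) {x : Fin n} (hx : blue x = false)
    (s : ℤ) : x ≠ γ s := by
  rintro rfl
  simpa [hx] using (hγ s).1

lemma IsKth.exists_red_left (hγ : A.IsKth {x | blue x = true} k γ) {t : ℤ}
    (hlt : A.cweight blue γ t < k - 1) : ∃ x, blue x = false ∧ A.pos t x < A.pos t (γ t) := by
  by_contra! hnone
  have hzero : A.countLeft {x | blue x = false} t (γ t) = 0 := by
    simp only [countLeft, card_eq_zero, filter_eq_empty_iff, mem_filter, mem_univ, true_and]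
    exact fun x hx => not_lt.mpr (hnone x hx)
  have := A.cweight_eq_sub blue γ t
  rw [hzero, hγ.countLeft_eq] at this
  omega

lemma IsKth.isBorder (hγ : A.IsKth {x | blue x = true} k γ) (hk : 0 < k)
    (h2k : 2 * k ≤ #{x | blue x = true}) {δ : ℤ} (hge : ∀ t, δ ≤ A.cweight blue γ t) :
    A.IsBorder blue δ γ :=
  ⟨hγ.isCurve, hγ.pos_lt_mirror hk h2k, Or.inl ⟨fun t => (mem_filter.mp (hγ t).1).2, hge,
    fun t => or_iff_not_imp_left.mpr fun hmove x _ => hγ.not_between_succ t x hmove⟩⟩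

def IsNearestRedLeft (A : AllowableSeq n) (blue : Fin n → Bool) (γ ρ : ℤ → Fin n) : Prop :=
  ∀ t : ℤ, blue (ρ t) = false ∧ A.pos t (ρ t) < A.pos t (γ t) ∧
    ∀ x : Fin n, blue x = false → A.pos t x < A.pos t (γ t) → A.pos t x ≤ A.pos t (ρ t)

lemma exists_isNearestRedLeft
    (h : ∀ t, ∃ x, blue x = false ∧ A.pos t x < A.pos t (γ t)) :
    ∃ ρ, A.IsNearestRedLeft blue γ ρ := by
  choose ρ hρ using fun t => exists_max_image {x | blue x = false ∧ A.pos t x < A.pos t (γ t)}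
    (A.pos t) (by obtain ⟨x, hx⟩ := h t; exact ⟨x, by simpa using hx⟩)
  refine ⟨ρ, fun t => ?_⟩
  obtain ⟨hmem, hmax⟩ := hρ t
  simp only [mem_filter, mem_univ, true_and] at hmem
  exact ⟨hmem.1, hmem.2, fun x hx hxγ => hmax x (by simp [hx, hxγ])⟩

namespace IsNearestRedLeft

variable {t : ℤ} {p q x : Fin n}

lemma lt_of_red (hρ : A.IsNearestRedLeft blue γ ρ) (hx : blue x = false)
    (hxγ : A.pos t x < A.pos t (γ t)) (hxρ : x ≠ ρ t) : A.pos t x < A.pos t (ρ t) :=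
  lt_of_le_of_ne ((hρ t).2.2 x hx hxγ) ((A.pos t).injective.ne hxρ)

lemma isCurve (hρ : A.IsNearestRedLeft blue γ ρ) (hγ : A.IsCurve γ) : A.IsCurve ρ := by
  intro t
  obtain ⟨hred, hlt, hmax⟩ := hρ t
  obtain ⟨hred', hlt', hmax'⟩ := hρ (t + 2 * n.choose 2)
  rw [A.pos_add_two_mul_choose, hγ t] at hlt' hmax'
  exact (A.pos t).injective (le_antisymm (hmax _ hred' hlt') (hmax' _ hred hlt))

lemma pos_lt_mirror (hρ : A.IsNearestRedLeft blue γ ρ)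
    (hγ : ∀ t, A.pos t (γ t) < A.pos t (mirror γ t)) (t : ℤ) :
    A.pos t (ρ t) < A.pos t (mirror ρ t) := by
  have hmirror : A.pos t (mirror γ t) < A.pos t (mirror ρ t) :=
    (A.pos_lt_pos_iff_sub_choose t _ _).mpr (hρ (t - n.choose 2)).2.1
  exact ((hρ t).2.1.trans (hγ t)).trans hmirror

lemma cweight_le (hρ : A.IsNearestRedLeft blue γ ρ) (t : ℤ) :
    A.cweight blue ρ t ≤ A.cweight blue γ t + 1 := by
  have hblue : A.countLeft {x | blue x = true} t (ρ t) ≤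
      A.countLeft {x | blue x = true} t (γ t) :=
    countLeft_mono (hρ t).2.1.le
  have hred_sub : ({y ∈ {x | blue x = false} | A.pos t y < A.pos t (γ t)} : Finset (Fin n)) ⊆
      insert (ρ t)
        ({y ∈ {x | blue x = false} | A.pos t y < A.pos t (ρ t)} : Finset (Fin n)) := by
    intro y hy
    simp only [mem_filter, mem_univ, true_and, mem_insert] at hy ⊢
    rcases eq_or_ne y (ρ t) with rfl | hne
    · exact Or.inl rfl
    · exact Or.inr ⟨hy.1, hρ.lt_of_red hy.1 hy.2 hne⟩
  have hred := (card_le_card hred_sub).trans (card_insert_le _ _)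
  rw [A.cweight_eq_sub, A.cweight_eq_sub]
  unfold countLeft at hblue ⊢
  omega

lemma not_between_succ_leftward (hρ : A.IsNearestRedLeft blue γ ρ)
    (hγ : A.IsKth {x | blue x = true} k γ) (h : A.StepAt t p q) (hx : blue x = false) :
    ¬ (A.pos (t + 1) (ρ (t + 1)) < A.pos (t + 1) x ∧
      A.pos (t + 1) x < A.pos (t + 1) (ρ t)) := by
  rintro ⟨hvx, hxu⟩
  have hxγ := hγ.ne_of_red hx
  have hgx : A.pos (t + 1) (γ (t + 1)) < A.pos (t + 1) x :=
    (A.pos_lt_or_gt (t + 1) (hxγ (t + 1))).resolve_left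
      fun hxg => ((hρ (t + 1)).2.2 x hx hxg).not_gt hvx
  rcases hγ.eq_or_eq_of_stepAt h with hstay | ⟨rfl, rfl⟩ | ⟨rfl, rfl⟩
  · rw [hstay] at hgx
    obtain ⟨rfl, rfl⟩ := h.eq_of_lt_of_succ_lt (hρ t).2.1 (hgx.trans hxu)
    exact h.not_between_succ ⟨hgx, hxu⟩
  · have hgx' := (h.succ_lt_succ_iff_of_right (hxγ t) (hxγ (t + 1))).mp hgx
    have hxu' := (h.succ_lt_succ_iff_of_left (hxγ t) (hxγ (t + 1))).mp hxu
    exact (((hgx'.trans hxu').trans (hρ t).2.1).trans h.pos_lt).false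
  · have hgx' := (h.succ_lt_succ_iff_of_right (hxγ (t + 1)) (hxγ t)).mp hgx
    have hxu' := (h.succ_lt_succ_iff_of_left (hxγ (t + 1)) (hxγ t)).mp hxu
    exact h.not_between ⟨hgx', hxu'.trans (hρ t).2.1⟩

lemma not_between_succ_rightward (hρ : A.IsNearestRedLeft blue γ ρ)
    (hγ : A.IsKth {x | blue x = true} k γ) (h : A.StepAt t p q) (hx : blue x = false) :
    ¬ (A.pos (t + 1) (ρ t) < A.pos (t + 1) x ∧
      A.pos (t + 1) x < A.pos (t + 1) (ρ (t + 1))) := by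
  rintro ⟨hux, hxv⟩
  have hxγ := hγ.ne_of_red hx
  have hxg : A.pos (t + 1) x < A.pos (t + 1) (γ (t + 1)) := hxv.trans (hρ (t + 1)).2.1
  rcases A.pos_lt_or_gt t (hxγ t) with hxg₀ | hgx₀
  · -- `x` and `ρ t` are the transposed pair, so `γ` stays put and `ρ (t+1)` was already
    -- a red point between `ρ t` and `γ t` at time `t`.
    have hxu : A.pos t x < A.pos t (ρ t) :=
      hρ.lt_of_red hx hxg₀ fun e => (e ▸ hux).false
    obtain ⟨rfl, rfl⟩ := h.eq_of_lt_of_succ_lt hxu hux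
    have hstay : γ (t + 1) = γ t := by
      rcases hγ.eq_or_eq_of_stepAt h with hstay | ⟨hp, -⟩ | ⟨hq, -⟩
      · exact hstay
      · exact absurd hp.symm (hxγ t)
      · exact absurd hq.symm (hγ.ne_of_red (hρ t).1 t)
    have hvx : ρ (t + 1) ≠ x := fun e => (e ▸ hxv).false
    have hvu : ρ (t + 1) ≠ ρ t := fun e => (e ▸ hux.trans hxv).false
    have huv := (h.succ_lt_succ_iff_of_right hvx hvu).mp (hux.trans hxv)
    have hvg := (h.succ_lt_succ_iff_of_right (hxγ t).symm (hγ.ne_of_red (hρ t).1 t).symm).mp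
      (hstay ▸ (hρ (t + 1)).2.1)
    exact ((hρ t).2.2 _ (hρ (t + 1)).1 hvg).not_gt huv
  · rcases hγ.eq_or_eq_of_stepAt h with hstay | ⟨rfl, rfl⟩ | ⟨rfl, rfl⟩
    · rw [hstay] at hxg
      obtain ⟨rfl, rfl⟩ := h.eq_of_lt_of_succ_lt hgx₀ hxg
      exact h.not_between_succ ⟨hxv, hstay ▸ (hρ (t + 1)).2.1⟩
    · exact h.not_between
        ⟨hgx₀, (h.succ_lt_succ_iff_of_left (hxγ t) (hxγ (t + 1))).mp hxg⟩
    · exact ((hgx₀.trans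
        ((h.succ_lt_succ_iff_of_left (hxγ (t + 1)) (hxγ t)).mp hxg)).trans h.pos_lt).false

lemma isBorder (hρ : A.IsNearestRedLeft blue γ ρ) (hγ : A.IsKth {x | blue x = true} k γ)
    (hk : 0 < k) (h2k : 2 * k ≤ #{x | blue x = true}) {δ : ℤ}
    (hlt : ∀ t, A.cweight blue γ t < δ) : A.IsBorder blue δ ρ := by
  refine ⟨hρ.isCurve hγ.isCurve, hρ.pos_lt_mirror (hγ.pos_lt_mirror hk h2k),
    Or.inr ⟨fun t => (hρ t).1, fun t => ?_, fun t => Or.inr fun x hx => ?_⟩⟩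
  · linarith [hρ.cweight_le t, hlt t]
  · obtain ⟨p, q, h⟩ := A.exists_stepAt t
    rw [min_lt_and_lt_max_iff]
    rintro (hright | hleft)
    · exact hρ.not_between_succ_rightward hγ h hx hright
    · exact hρ.not_between_succ_leftward hγ h hx hleft

end IsNearestRedLeft

end AllowableSeq

open AllowableSeq

theorem borders_exist_general (n b δ : ℕ) (A : AllowableSeq n) (blue : Fin n → Bool)
    (hb : (Finset.univ.filter (fun x => blue x = true)).card = b)
    (k : ℕ) (hk1 : δ + 1 ≤ k) (hk2 : k ≤ b / 2)
    (γ : ℤ → Fin n) (hγ : A.IsKth (Finset.univ.filter (fun x => blue x = true)) k γ)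
    (hpres : (∀ t : ℤ, (δ : ℤ) ≤ A.cweight blue γ t) ∨
             (∀ t : ℤ, A.cweight blue γ t < (δ : ℤ))) :
    (∃ γ' : ℤ → Fin n, A.IsBorder blue (δ : ℤ) γ') ∧
    ((∀ t : ℤ, (δ : ℤ) ≤ A.cweight blue γ t) → A.IsBorder blue (δ : ℤ) γ) ∧
    ((∀ t : ℤ, A.cweight blue γ t < (δ : ℤ)) →
      (∀ t : ℤ, ∃ x : Fin n, blue x = false ∧ A.pos t x < A.pos t (γ t)) ∧
      (∀ ρ : ℤ → Fin n,
        (∀ t : ℤ, blue (ρ t) = false ∧ A.pos t (ρ t) < A.pos t (γ t) ∧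
          ∀ x : Fin n, blue x = false → A.pos t x < A.pos t (γ t) →
            A.pos t x ≤ A.pos t (ρ t)) →
        A.IsBorder blue (δ : ℤ) ρ)) := by
  have hk : 0 < k := by omega
  have h2k : 2 * k ≤ #{x | blue x = true} := by omega
  have hred : (∀ t, A.cweight blue γ t < δ) →
      ∀ t, ∃ x, blue x = false ∧ A.pos t x < A.pos t (γ t) :=
    fun hlt t => hγ.exists_red_left (by have := hlt t; omega)
  refine ⟨?_, hγ.isBorder hk h2k, fun hlt =>
    ⟨hred hlt, fun ρ hρ => IsNearestRedLeft.isBorder hρ hγ hk h2k hlt⟩⟩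
  rcases hpres with hge | hlt
  · exact ⟨γ, hγ.isBorder hk h2k hge⟩
  · obtain ⟨ρ, hρ⟩ := exists_isNearestRedLeft (hred hlt)
    exact ⟨ρ, hρ.isBorder hγ hk h2k hlt⟩

theorem borders_exist (n b r δ : ℕ) (A : AllowableSeq n) (blue : Fin n → Bool)
    (hn : n = b + r)
    (hb : (Finset.univ.filter (fun x => blue x = true)).card = b)
    (hr : (Finset.univ.filter (fun x => blue x = false)).card = r)
    (hbr : b = r + 2 * δ)
    (k : ℕ) (hk1 : δ + 1 ≤ k) (hk2 : k ≤ b / 2)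
    (γ : ℤ → Fin n) (hγ : A.IsKth (Finset.univ.filter (fun x => blue x = true)) k γ)
    (hpres : (∀ t : ℤ, (δ : ℤ) ≤ A.cweight blue γ t) ∨
             (∀ t : ℤ, A.cweight blue γ t < (δ : ℤ))) :
    (∃ γ' : ℤ → Fin n, A.IsBorder blue (δ : ℤ) γ') ∧
    ((∀ t : ℤ, (δ : ℤ) ≤ A.cweight blue γ t) → A.IsBorder blue (δ : ℤ) γ) ∧
    ((∀ t : ℤ, A.cweight blue γ t < (δ : ℤ)) →
      (∀ t : ℤ, ∃ x : Fin n, blue x = false ∧ A.pos t x < A.pos t (γ t)) ∧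
      (∀ ρ : ℤ → Fin n,
        (∀ t : ℤ, blue (ρ t) = false ∧ A.pos t (ρ t) < A.pos t (γ t) ∧
          ∀ x : Fin n, blue x = false → A.pos t x < A.pos t (γ t) →
            A.pos t x ≤ A.pos t (ρ t)) →
        A.IsBorder blue (δ : ℤ) ρ)) :=
  borders_exist_general n b δ A blue hb k hk1 hk2 γ hγ hpres
end
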